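/- arXiv:1801.06838 — 2 statements merged into one kernel-verified Lean document; each statement's English description precedes it below -/
import Mathlib

section
/- Let G be a locally compact, second countable Hausdorff topological group with left Haar measure m and modular function Δ, and let τ : G → G be a Borel measurable map. Then the map C^τ defined by [C^τ(K)](x,y) := Δ(y)^{-1/2} K(τ(y x⁻¹)·x, x·y⁻¹) preserves the L²-norm on G×G: for every measurable K : G×G → ℂ one has ∫_G ∫_G |[C^τ(K)](x,y)|² dm(x) dm(y) = ∫_G ∫_G |K(x,y)|² dm(x) dm(y) (as an equality in [0,∞]). -/
/-! The density `Δ⁻¹` makes the left Haar measure `m` right invariant, and uniqueness of Haar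
measure identifies `m.withDensity Δ⁻¹` with the right Haar measure `m.inv`. The weight `Δ(y)⁻¹`
in `|C^τ K|²` is thereby absorbed by integrating `y` against `m.inv`; right invariance of `m.inv`
removes the `x` from `x y⁻¹`, after Tonelli left invariance of `m` removes `τ(y)` from
`τ(y) x`, and inverting `y` returns to `m`. -/

open MeasureTheory Measure ENNReal NNReal

lemma lintegral_withDensity_coe {α : Type*} [MeasurableSpace α] (μ : Measure α) {δ : α → ℝ≥0}
    (hδ : Measurable δ) (f : α → ℝ≥0∞) :
    ∫⁻ x, f x ∂μ.withDensity (fun x ↦ δ x) = ∫⁻ x, δ x * f x ∂μ :=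
  lintegral_withDensity_eq_lintegral_mul_non_measurable _ hδ.coe_nnreal_ennreal
    (.of_forall fun _ ↦ coe_lt_top) f

lemma lintegral_measure_inv {G : Type*} [Group G] [MeasurableSpace G] [MeasurableInv G]
    (μ : Measure G) (f : G → ℝ≥0∞) : ∫⁻ x, f x ∂μ.inv = ∫⁻ x, f x⁻¹ ∂μ :=
  lintegral_map_equiv f (MeasurableEquiv.inv G)

lemma smul_haarMeasure_injective {G : Type*} [Group G] [TopologicalSpace G]
    [IsTopologicalGroup G] [LocallyCompactSpace G] [MeasurableSpace G] [BorelSpace G]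
    (m : Measure G) [m.IsHaarMeasure] : Function.Injective fun c : ℝ≥0 ↦ c • m := by
  intro c d hcd
  calc c = haarScalarFactor (c • m) m := by simp
    _ = haarScalarFactor (d • m) m := by simp only at hcd; simp only [hcd]
    _ = d := by simp

/-- Mathlib's convention for the modular character (`Measure.modularCharacter`): `δ = Δ⁻¹` for
the modular function `Δ` of the statement. -/
def IsModularCharacter {G : Type*} [Group G] [MeasurableSpace G] (m : Measure G)
    (δ : G → ℝ≥0) : Prop :=
  ∀ x, m.map (· * x) = δ x • m

namespace IsModularCharacter

variable {G : Type*} [Group G] [MeasurableSpace G] {m : Measure G} {δ : G → ℝ≥0}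

lemma lintegral_mul_right [MeasurableMul G] (h : IsModularCharacter m δ) (f : G → ℝ≥0∞)
    (x : G) : ∫⁻ y, f (y * x) ∂m = δ x * ∫⁻ y, f y ∂m :=
  calc ∫⁻ y, f (y * x) ∂m = ∫⁻ y, f y ∂(m.map (· * x)) :=
        (lintegral_map_equiv f (MeasurableEquiv.mulRight x)).symm
    _ = δ x * ∫⁻ y, f y ∂m := by
        rw [h x, lintegral_smul_measure, ENNReal.smul_def, smul_eq_mul]

variable [TopologicalSpace G] [IsTopologicalGroup G] [LocallyCompactSpace G] [BorelSpace G]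
  [m.IsHaarMeasure]

lemma map_one (h : IsModularCharacter m δ) : δ 1 = 1 :=
  smul_haarMeasure_injective m <| by simpa using (h 1).symm

lemma map_mul (h : IsModularCharacter m δ) (x y : G) : δ (x * y) = δ x * δ y := by
  refine smul_haarMeasure_injective m (?_ : δ (x * y) • m = (δ x * δ y) • m)
  rw [← h (x * y), show (· * (x * y)) = (· * y) ∘ (· * x) by ext; simp [mul_assoc],
    ← map_map (measurable_mul_const y) (measurable_mul_const x), h x, Measure.map_smul, h y,
    smul_smul, mul_comm]

lemma map_inv_mul_self (h : IsModularCharacter m δ) (x : G) : δ x⁻¹ * δ x = 1 := by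
  rw [← h.map_mul, inv_mul_cancel, h.map_one]

lemma isMulRightInvariant_withDensity (h : IsModularCharacter m δ) (hδ : Measurable δ) :
    (m.withDensity fun x ↦ δ x).IsMulRightInvariant := by
  refine ⟨fun x ↦ ext_of_lintegral _ fun f hf ↦ ?_⟩
  rw [lintegral_map hf (measurable_mul_const x),
    lintegral_withDensity_coe _ hδ, lintegral_withDensity_coe _ hδ]
  calc ∫⁻ y, δ y * f (y * x) ∂m = ∫⁻ y, δ (y * x * x⁻¹) * f (y * x) ∂m := by
        simp only [mul_inv_cancel_right]
    _ = δ x * ∫⁻ y, δ (y * x⁻¹) * f y ∂m := h.lintegral_mul_right (fun y ↦ δ (y * x⁻¹) * f y) x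
    _ = δ x * ∫⁻ y, δ x⁻¹ * (δ y * f y) ∂m := by
        simp only [h.map_mul, coe_mul]
        exact congrArg _ (lintegral_congr fun y ↦ by ring)
    _ = ∫⁻ y, δ y * f y ∂m := by
        rw [lintegral_const_mul' _ _ coe_ne_top, ← mul_assoc, ← coe_mul, mul_comm (δ x),
          h.map_inv_mul_self, ENNReal.coe_one, one_mul]

/-- Both sides are right Haar measures, so `m.withDensity δ = c • m.inv`; since
`μ ↦ (μ.withDensity δ).inv` is an involution on measures, `c ^ 2 = 1`. -/
theorem withDensity_eq_inv [SecondCountableTopology G] (h : IsModularCharacter m δ)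
    (hδ : Continuous δ) : m.withDensity (fun x ↦ δ x) = m.inv := by
  set μR := m.withDensity fun x ↦ (δ x : ℝ≥0∞)
  have := h.isMulRightInvariant_withDensity hδ.measurable
  have : IsLocallyFiniteMeasure μR := .withDensity_coe hδ
  obtain ⟨c, hc⟩ : ∃ c : ℝ≥0, μR.inv = c • m := ⟨_, isMulLeftInvariant_eq_smul μR.inv m⟩
  have hinvol : (μR.inv.withDensity fun x ↦ δ x).inv = m := by
    refine ext_of_lintegral _ fun f _ ↦ ?_
    rw [lintegral_measure_inv, lintegral_withDensity_coe _ hδ.measurable, lintegral_measure_inv,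
      lintegral_withDensity_coe _ hδ.measurable]
    refine lintegral_congr fun y ↦ ?_
    rw [inv_inv, ← mul_assoc, ← coe_mul, mul_comm (δ y), h.map_inv_mul_self, ENNReal.coe_one,
      one_mul]
  have hsq : (μR.inv.withDensity fun x ↦ δ x).inv = (c ^ 2) • m := by
    rw [hc, ENNReal.smul_def, withDensity_smul_measure, inv_def, Measure.map_smul, ← inv_def,
      ← ENNReal.smul_def, hc, smul_smul, sq]
  have hc1 : c = 1 :=
    (pow_eq_one_iff_of_nonneg (zero_le (a := c)) two_ne_zero).mp <|
      smul_haarMeasure_injective m (by simp only [one_smul, ← hsq, hinvol])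
  rw [← Measure.inv_inv μR, hc, hc1, one_smul]

end IsModularCharacter

lemma lintegral_lintegral_ctau {G : Type*} [Group G] [MeasurableSpace G] [MeasurableMul₂ G]
    [MeasurableInv G] (m : Measure G) [SFinite m] [m.IsMulLeftInvariant] {τ : G → G}
    (hτ : Measurable τ) {f : G × G → ℝ≥0∞} (hf : Measurable f) :
    ∫⁻ x, ∫⁻ y, f (τ (y * x⁻¹) * x, x * y⁻¹) ∂m.inv ∂m = ∫⁻ x, ∫⁻ y, f (x, y) ∂m ∂m :=
  calc ∫⁻ x, ∫⁻ y, f (τ (y * x⁻¹) * x, x * y⁻¹) ∂m.inv ∂m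
      = ∫⁻ x, ∫⁻ y, f (τ y * x, y⁻¹) ∂m.inv ∂m := lintegral_congr fun x ↦ by
        simpa only [mul_inv_rev, inv_inv] using
          lintegral_mul_right_eq_self (μ := m.inv) (fun y ↦ f (τ y * x, y⁻¹)) x⁻¹
    _ = ∫⁻ y, ∫⁻ x, f (τ y * x, y⁻¹) ∂m ∂m.inv :=
        lintegral_lintegral_swap <| (hf.comp <| ((hτ.comp measurable_snd).mul measurable_fst).prodMk
          measurable_snd.inv).aemeasurable
    _ = ∫⁻ y, ∫⁻ x, f (x, y⁻¹) ∂m ∂m.inv :=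
        lintegral_congr fun y ↦ lintegral_mul_left_eq_self (fun x ↦ f (x, y⁻¹)) (τ y)
    _ = ∫⁻ y, ∫⁻ x, f (x, y) ∂m ∂m := by simp only [lintegral_measure_inv, inv_inv]
    _ = ∫⁻ x, ∫⁻ y, f (x, y) ∂m ∂m :=
        (lintegral_lintegral_swap (f := fun x y ↦ f (x, y)) hf.aemeasurable).symm

lemma coe_nnnorm_inv_sqrt_smul_sq {E : Type*} [NormedAddCommGroup E] [NormedSpace ℝ E] (r : ℝ)
    (z : E) : (‖(√r)⁻¹ • z‖₊ : ℝ≥0∞) ^ 2 = r⁻¹.toNNReal * (‖z‖₊ : ℝ≥0∞) ^ 2 := by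
  have : ‖(√r)⁻¹‖₊ ^ 2 = r⁻¹.toNNReal := by
    rw [← Real.sqrt_inv, Real.nnnorm_of_nonneg (Real.sqrt_nonneg _)]
    ext
    simp only [NNReal.coe_pow, NNReal.coe_mk, Real.sq_sqrt', Real.coe_toNNReal']
  rw [nnnorm_smul, ENNReal.coe_mul, mul_pow, ← ENNReal.coe_pow, this]

theorem ctau_preserves_L2_norm_general
    {G : Type*} [Group G] [TopologicalSpace G] [IsTopologicalGroup G]
    [LocallyCompactSpace G] [SecondCountableTopology G]
    [MeasurableSpace G] [BorelSpace G]
    (m : Measure G) [m.IsHaarMeasure]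
    (Δ : G → ℝ) (hΔcont : Continuous Δ)
    (hΔ : ∀ x : G, Measure.map (fun y => y * x) m = ENNReal.ofReal (Δ x)⁻¹ • m)
    (τ : G → G) (hτ : Measurable τ)
    (K : G × G → ℂ) (hK : Measurable K) :
    ∫⁻ x, ∫⁻ y,
        (‖(Real.sqrt (Δ y))⁻¹ • K (τ (y * x⁻¹) * x, x * y⁻¹)‖₊ : ℝ≥0∞) ^ 2 ∂m ∂m
      = ∫⁻ x, ∫⁻ y, (‖K (x, y)‖₊ : ℝ≥0∞) ^ 2 ∂m ∂m := by
  have hmod : IsModularCharacter m fun x ↦ (Δ x)⁻¹.toNNReal := hΔ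
  have hΔpos (x : G) : 0 < Δ x :=
    inv_pos.mp <| Real.toNNReal_pos.mp <| pos_iff_ne_zero.mpr <|
      right_ne_zero_of_mul_eq_one (hmod.map_inv_mul_self x)
  have hδcont : Continuous fun x ↦ (Δ x)⁻¹.toNNReal :=
    continuous_real_toNNReal.comp (hΔcont.inv₀ fun x ↦ (hΔpos x).ne')
  have hweight (F : G → ℝ≥0∞) : ∫⁻ y, (Δ y)⁻¹.toNNReal * F y ∂m = ∫⁻ y, F y ∂m.inv := by
    rw [← hmod.withDensity_eq_inv hδcont, lintegral_withDensity_coe _ hδcont.measurable]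
  simp only [coe_nnnorm_inv_sqrt_smul_sq, hweight]
  exact lintegral_lintegral_ctau m hτ (hK.nnnorm.coe_nnreal_ennreal.pow_const 2)

/-- For a locally compact second countable Hausdorff group `G` with left Haar
measure `m` and modular function `Δ` (characterized by
`Measure.map (· * x) m = ENNReal.ofReal (Δ x)⁻¹ • m`), and any Borel measurable `τ : G → G`,
the change-of-variables map
`[C^τ(K)](x,y) = Δ(y)^{-1/2} K(τ(y x⁻¹)·x, x·y⁻¹)` preserves the `L²`-norm on `G × G`,
as an equality in `[0,∞]`. -/
theorem ctau_preserves_L2_norm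
    {G : Type*} [Group G] [TopologicalSpace G] [IsTopologicalGroup G]
    [LocallyCompactSpace G] [SecondCountableTopology G] [T2Space G]
    [MeasurableSpace G] [BorelSpace G]
    (m : Measure G) [m.IsHaarMeasure]
    (Δ : G → ℝ) (hΔpos : ∀ x, 0 < Δ x) (hΔcont : Continuous Δ)
    (hΔ : ∀ x : G, Measure.map (fun y => y * x) m = ENNReal.ofReal (Δ x)⁻¹ • m)
    (τ : G → G) (hτ : Measurable τ)
    (K : G × G → ℂ) (hK : Measurable K) :
    ∫⁻ x, ∫⁻ y,
        (‖(Real.sqrt (Δ y))⁻¹ • K (τ (y * x⁻¹) * x, x * y⁻¹)‖₊ : ℝ≥0∞) ^ 2 ∂m ∂m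
      = ∫⁻ x, ∫⁻ y, (‖K (x, y)‖₊ : ℝ≥0∞) ^ 2 ∂m ∂m :=
  ctau_preserves_L2_norm_general m Δ hΔcont hΔ τ hτ K hK
end

section
/- Let G be a locally compact, second countable Hausdorff topological group with left Haar measure m and modular function Δ, and let τ : G → G be a Borel measurable map. Then the map K ↦ C^τ(K), where [C^τ(K)](x,y) := Δ(y)^{-1/2} K(τ(y x⁻¹)·x, x·y⁻¹), induces a unitary operator (a surjective linear isometry) of L²(G×G, m⊗m) onto itself, whose inverse is induced by L ↦ [(x,y) ↦ Δ(y⁻¹·τ(y⁻¹)⁻¹·x)^{1/2} L(τ(y⁻¹)⁻¹·x, y⁻¹·τ(y⁻¹)⁻¹·x)]. -/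
/-!
`C^τ` is the weighted composition operator `K ↦ w · (K ∘ T)` with `T(x, y) = (τ(y x⁻¹) x, x y⁻¹)`
and `w(x, y) = Δ(y)^{-1/2}`. Such an operator is unitary on `L²` as soon as `T` carries
`|w|² · (m ⊗ m)` onto `m ⊗ m` and has a measurable left inverse `S`, the inverse being
`L ↦ (w ∘ S)⁻¹ · (L ∘ S)`. Here `T` factors as `(x, y) ↦ (x, y⁻¹) ↦ (x, x y⁻¹) ↦ T(x, y)`; the last
two steps preserve `m ⊗ m` by left invariance, and the first carries `Δ(y)⁻¹ · (m ⊗ m)` onto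
`m ⊗ m` by the inversion formula `m.inv = Δ⁻¹ · m`.
-/

open Function ENNReal
open scoped NNReal

namespace MeasureTheory

section WeightedComposition

variable {α β E : Type*} [MeasurableSpace α] [MeasurableSpace β] {μ : Measure α} {ν : Measure β}
  [NormedAddCommGroup E] [NormedSpace ℝ E] {p : ℝ≥0∞} {w : α → ℝ} {T : α → β}

def weightedComp (w : α → ℝ) (T : α → β) (f : β → E) : α → E := fun a => w a • f (T a)

theorem MeasurePreserving.quasiMeasurePreserving_of_withDensity {ρ : α → ℝ≥0∞}
    (hT : MeasurePreserving T (μ.withDensity ρ) ν) (hρ : AEMeasurable ρ μ)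
    (hρ0 : ∀ᵐ a ∂μ, ρ a ≠ 0) : Measure.QuasiMeasurePreserving T μ ν :=
  ⟨hT.measurable, hT.map_eq ▸ (withDensity_absolutelyContinuous' hρ hρ0).map hT.measurable⟩

theorem MeasurePreserving.quasiMeasurePreserving_of_weight
    (hT : MeasurePreserving T (μ.withDensity fun a => ‖w a‖ₑ ^ p.toReal) ν) (hw : Measurable w)
    (hw0 : ∀ a, w a ≠ 0) : Measure.QuasiMeasurePreserving T μ ν :=
  hT.quasiMeasurePreserving_of_withDensity (hw.enorm.pow_const _).aemeasurable <|
    .of_forall fun a => (ENNReal.rpow_pos (enorm_pos.2 (hw0 a)) enorm_ne_top).ne'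

theorem AEStronglyMeasurable.weightedComp (hw : Measurable w)
    (hT : Measure.QuasiMeasurePreserving T μ ν) {f : β → E} (hf : AEStronglyMeasurable f ν) :
    AEStronglyMeasurable (weightedComp w T f) μ :=
  hw.aestronglyMeasurable.smul (hf.comp_quasiMeasurePreserving hT)

theorem eLpNorm_weightedComp (hp : p ≠ ∞)
    (hT : MeasurePreserving T (μ.withDensity fun a => ‖w a‖ₑ ^ p.toReal) ν) (hw : Measurable w)
    {f : β → E} (hf : AEStronglyMeasurable f ν) :
    eLpNorm (weightedComp w T f) p μ = eLpNorm f p ν := by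
  rcases eq_or_ne p 0 with rfl | hp0
  · simp
  simp only [eLpNorm_eq_lintegral_rpow_enorm_toReal hp0 hp, weightedComp, enorm_smul,
    ENNReal.mul_rpow_of_nonneg _ _ toReal_nonneg]
  have hf' : AEMeasurable (fun b => ‖f b‖ₑ ^ p.toReal)
      (.map T (μ.withDensity fun a => ‖w a‖ₑ ^ p.toReal)) :=
    hT.map_eq ▸ hf.enorm.pow_const _
  rw [← hT.map_eq, lintegral_map' hf' hT.aemeasurable,
    lintegral_withDensity_eq_lintegral_mul₀' (hw.enorm.pow_const _).aemeasurable
      (g := fun a => ‖f (T a)‖ₑ ^ p.toReal) (hf'.comp_aemeasurable hT.aemeasurable)]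
  rfl

theorem MemLp.weightedComp (hp : p ≠ ∞)
    (hT : MeasurePreserving T (μ.withDensity fun a => ‖w a‖ₑ ^ p.toReal) ν) (hw : Measurable w)
    (hw0 : ∀ a, w a ≠ 0) {f : β → E} (hf : MemLp f p ν) : MemLp (weightedComp w T f) p μ :=
  ⟨hf.1.weightedComp hw (hT.quasiMeasurePreserving_of_weight hw hw0),
    eLpNorm_weightedComp hp hT hw hf.1 ▸ hf.2⟩

theorem MeasurePreserving.withDensity_inv_comp {ρ : α → ℝ≥0∞} {S : β → α}
    (hT : MeasurePreserving T (μ.withDensity ρ) ν) (hρ : Measurable ρ) (hρ0 : ∀ a, ρ a ≠ 0)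
    (hρ_top : ∀ a, ρ a ≠ ∞) (hS : Measurable S) (hST : LeftInverse S T) :
    MeasurePreserving S (ν.withDensity fun b => (ρ (S b))⁻¹) μ := by
  refine ⟨hS, Measure.ext_of_lintegral _ fun f hf => ?_⟩
  have hρS : Measurable fun b => (ρ (S b))⁻¹ := (hρ.comp hS).inv
  have hg : Measurable ((fun b => (ρ (S b))⁻¹) * fun b => f (S b)) := hρS.mul (hf.comp hS)
  rw [lintegral_map hf hS,
    lintegral_withDensity_eq_lintegral_mul _ hρS (g := fun b => f (S b)) (hf.comp hS),
    ← hT.lintegral_comp hg, lintegral_withDensity_eq_lintegral_mul _ hρ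
      (g := fun a => ((fun b => (ρ (S b))⁻¹) * fun b => f (S b)) (T a)) (hg.comp hT.measurable)]
  refine lintegral_congr fun a => ?_
  simp only [Pi.mul_apply, hST a, ← mul_assoc,
    ENNReal.mul_inv_cancel (hρ0 a) (hρ_top a), one_mul]

variable {𝕜 : Type*} [NormedField 𝕜] [NormedSpace 𝕜 E] [SMulCommClass ℝ 𝕜 E] [Fact (1 ≤ p)]

variable (𝕜) in
noncomputable def weightedCompLp (hp : p ≠ ∞)
    (hT : MeasurePreserving T (μ.withDensity fun a => ‖w a‖ₑ ^ p.toReal) ν) (hw : Measurable w)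
    (hw0 : ∀ a, w a ≠ 0) : Lp E p ν →ₗᵢ[𝕜] Lp E p μ where
  toFun f := ((Lp.memLp f).weightedComp hp hT hw hw0).toLp _
  map_add' f g := by
    rw [← MemLp.toLp_add]
    refine MemLp.toLp_congr _ _ ?_
    filter_upwards [(hT.quasiMeasurePreserving_of_weight hw hw0).ae_eq_comp
      (Lp.coeFn_add f g)] with a ha
    simp only [comp_apply, Pi.add_apply] at ha
    simp only [weightedComp, ha, Pi.add_apply, smul_add]
  map_smul' c f := by
    rw [← MemLp.toLp_const_smul]
    refine MemLp.toLp_congr _ _ ?_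
    filter_upwards [(hT.quasiMeasurePreserving_of_weight hw hw0).ae_eq_comp
      (Lp.coeFn_smul c f)] with a ha
    simp only [comp_apply, Pi.smul_apply] at ha
    simp only [weightedComp, ha, Pi.smul_apply, RingHom.id_apply, smul_comm (w a) c]
  norm_map' f := by
    rw [LinearMap.coe_mk, AddHom.coe_mk, Lp.norm_toLp,
      eLpNorm_weightedComp hp hT hw (Lp.aestronglyMeasurable f), Lp.norm_def]

variable (𝕜) in
theorem weightedCompLp_ae_eq (hp : p ≠ ∞)
    (hT : MeasurePreserving T (μ.withDensity fun a => ‖w a‖ₑ ^ p.toReal) ν) (hw : Measurable w)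
    (hw0 : ∀ a, w a ≠ 0) (f : Lp E p ν) :
    weightedCompLp 𝕜 hp hT hw hw0 f =ᵐ[μ] weightedComp w T f :=
  MemLp.coeFn_toLp ((Lp.memLp f).weightedComp hp hT hw hw0)

theorem exists_linearIsometryEquiv_weightedComp (hp : p ≠ ∞)
    (hT : MeasurePreserving T (μ.withDensity fun a => ‖w a‖ₑ ^ p.toReal) ν) (hw : Measurable w)
    (hw0 : ∀ a, w a ≠ 0) {S : β → α} (hS : Measurable S) (hST : LeftInverse S T) :
    ∃ U : Lp E p ν ≃ₗᵢ[𝕜] Lp E p μ, (∀ f, U f =ᵐ[μ] weightedComp w T f) ∧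
      ∀ g, U.symm g =ᵐ[ν] weightedComp (fun b => (w (S b))⁻¹) S g := by
  -- Only `S ∘ T = id` is needed: an isometry is injective, and `hUV` makes it surjective.
  have hwS : Measurable fun b => (w (S b))⁻¹ := (hw.comp hS).inv
  have hwS0 : ∀ b, (w (S b))⁻¹ ≠ 0 := fun b => inv_ne_zero (hw0 (S b))
  have hS' : MeasurePreserving S
      (ν.withDensity fun b => ‖(w (S b))⁻¹‖ₑ ^ p.toReal) μ := by
    have := hT.withDensity_inv_comp (hw.enorm.pow_const _)
      (fun a => (ENNReal.rpow_pos (enorm_pos.2 (hw0 a)) enorm_ne_top).ne')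
      (fun a => ENNReal.rpow_ne_top_of_nonneg toReal_nonneg enorm_ne_top) hS hST
    simpa only [enorm_inv (hw0 _), ENNReal.inv_rpow] using this
  have hUV : ∀ g : Lp E p μ, weightedCompLp 𝕜 hp hT hw hw0
      (weightedCompLp 𝕜 hp hS' hwS hwS0 g) = g := fun g => Lp.ext <| by
    filter_upwards [weightedCompLp_ae_eq 𝕜 hp hT hw hw0 (weightedCompLp 𝕜 hp hS' hwS hwS0 g),
      (hT.quasiMeasurePreserving_of_weight hw hw0).ae_eq_comp
        (weightedCompLp_ae_eq 𝕜 hp hS' hwS hwS0 g)] with a hV hU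
    rw [comp_apply, comp_apply] at hU
    rw [hV, weightedComp, hU, weightedComp, hST a, smul_smul, mul_inv_cancel₀ (hw0 a), one_smul]
  let U := LinearIsometryEquiv.ofSurjective _ (RightInverse.surjective hUV)
  refine ⟨U, weightedCompLp_ae_eq 𝕜 hp hT hw hw0, fun g => ?_⟩
  rw [U.symm_apply_eq.2 (hUV g).symm]
  exact weightedCompLp_ae_eq 𝕜 hp hS' hwS hwS0 g

end WeightedComposition

section Modular

variable {G : Type*} [Group G] [TopologicalSpace G] [IsTopologicalGroup G] [MeasurableSpace G]
  [BorelSpace G] {m : Measure G} {Δ : G → ℝ}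

def IsModularFunction (m : Measure G) (Δ : G → ℝ) : Prop :=
  ∀ x, Measure.map (fun y => y * x) m = ENNReal.ofReal (Δ x)⁻¹ • m

namespace IsModularFunction

theorem lintegral_comp_mul_right (hΔ : IsModularFunction m Δ) {f : G → ℝ≥0∞}
    (hf : Measurable f) (x : G) :
    ∫⁻ y, f (y * x) ∂m = ENNReal.ofReal (Δ x)⁻¹ * ∫⁻ y, f y ∂m := by
  rw [← lintegral_map hf (measurable_mul_const x), hΔ x, lintegral_smul_measure, smul_eq_mul]

variable [m.IsHaarMeasure]

theorem pos (hΔ : IsModularFunction m Δ) (x : G) : 0 < Δ x := by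
  by_contra! h
  have hmap := hΔ x
  rw [ENNReal.ofReal_of_nonpos (inv_nonpos.2 h), zero_smul] at hmap
  exact NeZero.ne m ((Measure.map_eq_zero_iff (measurable_mul_const x).aemeasurable).1 hmap)

variable [LocallyCompactSpace G]

theorem modularCharacter_eq (hΔ : IsModularFunction m Δ) (x : G) :
    (Measure.modularCharacter x : ℝ) = (Δ x)⁻¹ := by
  change (Measure.modularCharacterFun x : ℝ) = _
  simp only [Measure.modularCharacterFun_eq_haarScalarFactor m, hΔ x, ENNReal.ofReal,
    ← ENNReal.smul_def, Measure.haarScalarFactor_smul, Measure.haarScalarFactor_self, smul_eq_mul,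
    mul_one]
  exact Real.coe_toNNReal _ (inv_nonneg.2 (hΔ.pos x).le)

theorem map_mul (hΔ : IsModularFunction m Δ) (x y : G) : Δ (x * y) = Δ x * Δ y := by
  have h := congrArg ((↑) : ℝ≥0 → ℝ) (_root_.map_mul Measure.modularCharacter x y)
  rw [NNReal.coe_mul, hΔ.modularCharacter_eq, hΔ.modularCharacter_eq, hΔ.modularCharacter_eq,
    ← mul_inv] at h
  exact inv_injective h

theorem map_one (hΔ : IsModularFunction m Δ) : Δ 1 = 1 := by
  have h := hΔ.map_mul 1 1
  rw [one_mul] at h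
  exact (mul_eq_left₀ (hΔ.pos 1).ne').1 h.symm

theorem ofReal_inv_mul (hΔ : IsModularFunction m Δ) (x y : G) :
    ENNReal.ofReal (Δ (x * y))⁻¹ = ENNReal.ofReal (Δ x)⁻¹ * ENNReal.ofReal (Δ y)⁻¹ := by
  rw [hΔ.map_mul, mul_inv, ENNReal.ofReal_mul (inv_nonneg.2 (hΔ.pos x).le)]

theorem ofReal_inv_mul_ofReal_inv_inv (hΔ : IsModularFunction m Δ) (x : G) :
    ENNReal.ofReal (Δ x)⁻¹ * ENNReal.ofReal (Δ x⁻¹)⁻¹ = 1 := by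
  rw [← hΔ.ofReal_inv_mul, mul_inv_cancel, hΔ.map_one, inv_one, ENNReal.ofReal_one]

theorem isMulRightInvariant_withDensity (hΔ : IsModularFunction m Δ) (hΔm : Measurable Δ) :
    (m.withDensity fun x => ENNReal.ofReal (Δ x)⁻¹).IsMulRightInvariant := by
  have hD : Measurable fun x => ENNReal.ofReal (Δ x)⁻¹ := hΔm.inv.ennreal_ofReal
  refine ⟨fun g => Measure.ext_of_lintegral _ fun f hf => ?_⟩
  have hDf : Measurable fun y => ENNReal.ofReal (Δ y)⁻¹ * f y := hD.mul hf
  rw [lintegral_map hf (measurable_mul_const g),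
    lintegral_withDensity_eq_lintegral_mul _ hD (g := fun y => f (y * g))
      (hf.comp (measurable_mul_const g)),
    lintegral_withDensity_eq_lintegral_mul _ hD hf]
  calc ∫⁻ y, ENNReal.ofReal (Δ y)⁻¹ * f (y * g) ∂m
      = ∫⁻ y, ENNReal.ofReal (Δ g⁻¹)⁻¹ * (ENNReal.ofReal (Δ (y * g))⁻¹ * f (y * g)) ∂m := by
        refine lintegral_congr fun y => ?_
        rw [← mul_assoc, mul_comm _ (ENNReal.ofReal _), ← hΔ.ofReal_inv_mul, mul_inv_cancel_right]
    _ = ENNReal.ofReal (Δ g⁻¹)⁻¹ * (ENNReal.ofReal (Δ g)⁻¹ *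
          ∫⁻ y, ENNReal.ofReal (Δ y)⁻¹ * f y ∂m) := by
        rw [lintegral_const_mul _ (f := fun y => ENNReal.ofReal (Δ (y * g))⁻¹ * f (y * g))
            (hDf.comp (measurable_mul_const g)),
          hΔ.lintegral_comp_mul_right hDf]
    _ = ∫⁻ y, ENNReal.ofReal (Δ y)⁻¹ * f y ∂m := by
        rw [← mul_assoc, mul_comm (ENNReal.ofReal _), hΔ.ofReal_inv_mul_ofReal_inv_inv, one_mul]

/-- Haar uniqueness gives `ρ.inv = c • m` for the right-invariant `ρ = Δ⁻¹ · m`; then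
`m.inv = c • ρ`, and inverting once more yields `m = c² • m`, so `c = 1`. -/
theorem inv_eq_withDensity [SecondCountableTopology G] (hΔ : IsModularFunction m Δ)
    (hΔc : Continuous Δ) : m.inv = m.withDensity fun x => ENNReal.ofReal (Δ x)⁻¹ := by
  set ρ := m.withDensity fun x => ENNReal.ofReal (Δ x)⁻¹
  have hD : Measurable fun x => ENNReal.ofReal (Δ x)⁻¹ := hΔc.measurable.inv.ennreal_ofReal
  have hρ_lintegral (g : G → ℝ≥0∞) (hg : Measurable g) :
      ∫⁻ x, g x ∂ρ = ∫⁻ x, ENNReal.ofReal (Δ x)⁻¹ * g x ∂m :=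
    lintegral_withDensity_eq_lintegral_mul _ hD hg
  have := hΔ.isMulRightInvariant_withDensity hΔc.measurable
  have : IsLocallyFiniteMeasure ρ :=
    IsLocallyFiniteMeasure.withDensity_ofReal (hΔc.inv₀ fun x => (hΔ.pos x).ne')
  set c := ρ.inv.haarScalarFactor m
  have hρ : ρ.inv = c • m := Measure.isMulLeftInvariant_eq_smul _ _
  have hm : m.inv = c • ρ := by
    refine Measure.ext_of_lintegral _ fun f hf => ?_
    have hDf : Measurable fun y => ENNReal.ofReal (Δ y)⁻¹ * f y := hD.mul hf
    calc ∫⁻ x, f x ∂m.inv = ∫⁻ x, ENNReal.ofReal (Δ x)⁻¹ * f x ∂ρ.inv := by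
          rw [Measure.inv, Measure.inv, lintegral_map hf measurable_inv,
            lintegral_map hDf measurable_inv,
            hρ_lintegral (fun x => ENNReal.ofReal (Δ x⁻¹)⁻¹ * f x⁻¹) (hDf.comp measurable_inv)]
          refine lintegral_congr fun x => ?_
          simp only [← mul_assoc, hΔ.ofReal_inv_mul_ofReal_inv_inv, one_mul]
      _ = ∫⁻ x, f x ∂(c • ρ) := by
          rw [hρ, lintegral_smul_measure, lintegral_smul_measure, hρ_lintegral f hf]
  have hc : c * c = 1 := by
    have h : m = (c * c) • m := by
      calc m = m.inv.inv := m.inv_inv.symm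
        _ = (c * c) • m := by
          rw [hm, Measure.inv, Measure.map_smul, ← Measure.inv, hρ, smul_smul]
    calc c * c = ((c * c) • m).haarScalarFactor m := by simp
      _ = 1 := by simp only [← h, Measure.haarScalarFactor_self]
  rw [hm, (pow_eq_one_iff_of_nonneg (by positivity : (0 : ℝ≥0) ≤ c) two_ne_zero).1 (by rwa [sq]),
    one_smul]

end IsModularFunction

end Modular

end MeasureTheory

open MeasureTheory Function

theorem measurePreserving_skew_mul_left {G : Type*} [Group G] [MeasurableSpace G]
    [MeasurableMul₂ G] {μ ν : Measure G} [SFinite μ] [SFinite ν] [μ.IsMulLeftInvariant]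
    {g : G → G} (hg : Measurable g) :
    MeasurePreserving (fun z : G × G => (g z.2 * z.1, z.2)) (μ.prod ν) (μ.prod ν) :=
  (Measure.measurePreserving_swap.comp ((MeasurePreserving.id ν).skew_product
    ((hg.comp measurable_fst).mul measurable_snd)
    (.of_forall fun v => map_mul_left_eq_self μ (g v)))).comp Measure.measurePreserving_swap

theorem enorm_inv_sqrt_rpow_two {x : ℝ} (hx : 0 ≤ x) :
    ‖(√x)⁻¹‖ₑ ^ (2 : ℝ) = ENNReal.ofReal x⁻¹ := by
  rw [Real.enorm_of_nonneg (inv_nonneg.2 (Real.sqrt_nonneg x)),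
    ENNReal.ofReal_rpow_of_nonneg (inv_nonneg.2 (Real.sqrt_nonneg x)) zero_le_two, Real.rpow_two,
    inv_pow, Real.sq_sqrt hx]

section Ctau

variable {G : Type*} [Group G]

def ctauMap (τ : G → G) (p : G × G) : G × G := (τ (p.2 * p.1⁻¹) * p.1, p.1 * p.2⁻¹)

def ctauMapInv (τ : G → G) (p : G × G) : G × G :=
  ((τ p.2⁻¹)⁻¹ * p.1, p.2⁻¹ * (τ p.2⁻¹)⁻¹ * p.1)

theorem leftInverse_ctauMapInv_ctauMap (τ : G → G) : LeftInverse (ctauMapInv τ) (ctauMap τ) := by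
  rintro ⟨x, y⟩
  simp only [ctauMap, ctauMapInv, mul_inv_rev, inv_inv, Prod.mk.injEq]
  constructor <;> group

variable [MeasurableSpace G] {τ : G → G}

theorem measurable_ctauMapInv [MeasurableMul₂ G] [MeasurableInv G] (hτ : Measurable τ) :
    Measurable (ctauMapInv τ) := by
  unfold ctauMapInv
  fun_prop

theorem measurePreserving_ctauMap [TopologicalSpace G] [IsTopologicalGroup G] [BorelSpace G]
    [LocallyCompactSpace G] [SecondCountableTopology G] {m : Measure G} [m.IsHaarMeasure]
    {Δ : G → ℝ} (hΔ : IsModularFunction m Δ) (hΔc : Continuous Δ) (hτ : Measurable τ) :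
    MeasurePreserving (ctauMap τ) ((m.prod m).withDensity fun p => ENNReal.ofReal (Δ p.2)⁻¹)
      (m.prod m) := by
  rw [← prod_withDensity_right (g := fun y => ENNReal.ofReal (Δ y)⁻¹)
    hΔc.measurable.inv.ennreal_ofReal, ← hΔ.inv_eq_withDensity hΔc]
  have hinv : MeasurePreserving Inv.inv m.inv m := ⟨measurable_inv, m.inv_inv⟩
  convert (measurePreserving_skew_mul_left (hτ.comp measurable_inv)).comp
    ((measurePreserving_prod_mul m m).comp ((MeasurePreserving.id m).prod hinv)) using 1
  funext p
  simp [ctauMap, mul_inv_rev]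

end Ctau

theorem ctau_unitary_general
    {G : Type*} [Group G] [TopologicalSpace G] [IsTopologicalGroup G]
    [LocallyCompactSpace G] [SecondCountableTopology G]
    [MeasurableSpace G] [BorelSpace G]
    (m : Measure G) [m.IsHaarMeasure]
    (Δ : G → ℝ) (hΔcont : Continuous Δ)
    (hΔ : ∀ x : G, Measure.map (fun y => y * x) m = ENNReal.ofReal (Δ x)⁻¹ • m)
    (τ : G → G) (hτ : Measurable τ) :
    ∃ U : Lp ℂ 2 (m.prod m) ≃ₗᵢ[ℂ] Lp ℂ 2 (m.prod m),
      (∀ K : Lp ℂ 2 (m.prod m),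
        (U K : G × G → ℂ) =ᵐ[m.prod m]
          fun p => (Real.sqrt (Δ p.2))⁻¹ •
            (K : G × G → ℂ) (τ (p.2 * p.1⁻¹) * p.1, p.1 * p.2⁻¹)) ∧
      (∀ L : Lp ℂ 2 (m.prod m),
        (U.symm L : G × G → ℂ) =ᵐ[m.prod m]
          fun p => Real.sqrt (Δ (p.2⁻¹ * (τ p.2⁻¹)⁻¹ * p.1)) •
            (L : G × G → ℂ) ((τ p.2⁻¹)⁻¹ * p.1, p.2⁻¹ * (τ p.2⁻¹)⁻¹ * p.1)) := by
  have hΔ : IsModularFunction m Δ := hΔ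
  have hT : MeasurePreserving (ctauMap τ)
      ((m.prod m).withDensity fun p => ‖(√(Δ p.2))⁻¹‖ₑ ^ (2 : ℝ≥0∞).toReal) (m.prod m) := by
    simpa only [ENNReal.toReal_ofNat, enorm_inv_sqrt_rpow_two (hΔ.pos _).le]
      using measurePreserving_ctauMap hΔ hΔcont hτ
  obtain ⟨U, hU, hU_symm⟩ := exists_linearIsometryEquiv_weightedComp (𝕜 := ℂ) (E := ℂ)
    ENNReal.ofNat_ne_top hT (hΔcont.comp continuous_snd).measurable.sqrt.inv
    (fun p => inv_ne_zero (Real.sqrt_pos.2 (hΔ.pos p.2)).ne') (measurable_ctauMapInv hτ)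
    (leftInverse_ctauMapInv_ctauMap τ)
  refine ⟨U, hU, fun L => (hU_symm L).trans (.of_forall fun p => ?_)⟩
  simp only [weightedComp, ctauMapInv, inv_inv]

/-- For a locally compact second countable Hausdorff group `G` with left Haar
measure `m` and modular function `Δ`, and a Borel measurable `τ : G → G`, the map
`K ↦ [(x,y) ↦ Δ(y)^{-1/2} K(τ(y x⁻¹)·x, x·y⁻¹)]` induces a unitary operator (a surjective
linear isometry) of `L²(G×G, m⊗m)` onto itself, whose inverse is induced by
`L ↦ [(x,y) ↦ Δ(y⁻¹·τ(y⁻¹)⁻¹·x)^{1/2} L(τ(y⁻¹)⁻¹·x, y⁻¹·τ(y⁻¹)⁻¹·x)]`. -/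
theorem ctau_unitary
    {G : Type*} [Group G] [TopologicalSpace G] [IsTopologicalGroup G]
    [LocallyCompactSpace G] [SecondCountableTopology G] [T2Space G]
    [MeasurableSpace G] [BorelSpace G]
    (m : Measure G) [m.IsHaarMeasure]
    (Δ : G → ℝ) (hΔpos : ∀ x, 0 < Δ x) (hΔcont : Continuous Δ)
    (hΔ : ∀ x : G, Measure.map (fun y => y * x) m = ENNReal.ofReal (Δ x)⁻¹ • m)
    (τ : G → G) (hτ : Measurable τ) :
    ∃ U : Lp ℂ 2 (m.prod m) ≃ₗᵢ[ℂ] Lp ℂ 2 (m.prod m),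
      (∀ K : Lp ℂ 2 (m.prod m),
        (U K : G × G → ℂ) =ᵐ[m.prod m]
          fun p => (Real.sqrt (Δ p.2))⁻¹ •
            (K : G × G → ℂ) (τ (p.2 * p.1⁻¹) * p.1, p.1 * p.2⁻¹)) ∧
      (∀ L : Lp ℂ 2 (m.prod m),
        (U.symm L : G × G → ℂ) =ᵐ[m.prod m]
          fun p => Real.sqrt (Δ (p.2⁻¹ * (τ p.2⁻¹)⁻¹ * p.1)) •
            (L : G × G → ℂ) ((τ p.2⁻¹)⁻¹ * p.1, p.2⁻¹ * (τ p.2⁻¹)⁻¹ * p.1)) :=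
  ctau_unitary_general m Δ hΔcont hΔ τ hτ
end
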